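/- arXiv:1903.00044 — 3 statements merged into one kernel-verified Lean document; each statement's English description precedes it below -/
import Mathlib

section
/- Let G be a compact connected Lie group with Lie algebra g = m ⊕ k an Ad(K)-invariant orthogonal decomposition, where k is the Lie algebra of a closed subgroup K. Then for every w ∈ m there exists a unique pair of real-linear maps B^m_w : g → m and B^k_w : g → k such that Id_g = (sin(ad_w)/ad_w) ∘ B^m_w + cos(ad_w) ∘ B^k_w on g. -/
open scoped RealInnerProductSpace

/-- The operator power series `sin(A)/A = Σ (-1)^p A^(2p)/(2p+1)!`. -/
noncomputable def sincOp {E : Type*} [NormedAddCommGroup E] [NormedSpace ℝ E]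
    (A : E →L[ℝ] E) : E →L[ℝ] E :=
  ∑' p : ℕ, ((-1 : ℝ) ^ p * ((Nat.factorial (2 * p + 1) : ℝ))⁻¹) • A ^ (2 * p)

/-- The operator power series `cos(A) = Σ (-1)^p A^(2p)/(2p)!`. -/
noncomputable def cosOp {E : Type*} [NormedAddCommGroup E] [NormedSpace ℝ E]
    (A : E →L[ℝ] E) : E →L[ℝ] E :=
  ∑' p : ℕ, ((-1 : ℝ) ^ p * ((Nat.factorial (2 * p) : ℝ))⁻¹) • A ^ (2 * p)

/-!
As `ad_w` is skew-adjoint, `-ad_w²` is positive semidefinite, and in an orthonormal eigenbasis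
of it (eigenvalues `λ² ≥ 0`) both series act diagonally, by `sinh λ / λ > 0` and `cosh λ > 0`.
So if `S u + C ζ = 0` with `u ∈ m` and `ζ ∈ k = mᗮ`, then `0 = ⟪ζ, u⟫ = -⟪C⁻¹ S u, u⟫` with
`C⁻¹ S` positive definite, whence `u = ζ = 0`. Thus `(u, ζ) ↦ S u + C ζ` is an injective linear
map `m × k → g` between spaces of equal dimension, and `(B^m_w, B^k_w)` are the components of its
inverse.
-/

open scoped Nat

section PowerSeries

variable {E : Type*} [NormedAddCommGroup E] [NormedSpace ℝ E] [CompleteSpace E]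
  {d : ℕ → ℝ}

theorem inv_factorial_le_inv_factorial {p q : ℕ} (h : p ≤ q) : ((q ! : ℝ))⁻¹ ≤ (p ! : ℝ)⁻¹ :=
  inv_anti₀ (by positivity) (by exact_mod_cast Nat.factorial_le h)

theorem summable_mul_pow_of_le_inv_factorial (hd0 : ∀ p, 0 ≤ d p)
    (hd : ∀ p, d p ≤ (p ! : ℝ)⁻¹) {μ : ℝ} (hμ : 0 ≤ μ) :
    Summable fun p ↦ d p * μ ^ p := by
  refine (Real.summable_pow_div_factorial μ).of_nonneg_of_le
    (fun p ↦ mul_nonneg (hd0 p) (pow_nonneg hμ p)) fun p ↦ ?_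
  rw [div_eq_inv_mul]
  exact mul_le_mul_of_nonneg_right (hd p) (pow_nonneg hμ p)

theorem summable_neg_one_pow_mul_smul_pow_two_mul (hd0 : ∀ p, 0 ≤ d p)
    (hd : ∀ p, d p ≤ (p ! : ℝ)⁻¹) (A : E →L[ℝ] E) :
    Summable fun p ↦ ((-1 : ℝ) ^ p * d p) • A ^ (2 * p) := by
  rcases subsingleton_or_nontrivial E with _ | _
  · exact (summable_zero : Summable fun _ : ℕ ↦ (0 : E →L[ℝ] E)).congr
      fun _ ↦ Subsingleton.elim _ _
  refine Summable.of_norm <| (summable_mul_pow_of_le_inv_factorial hd0 hd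
    (sq_nonneg ‖A‖)).of_nonneg_of_le (fun _ ↦ norm_nonneg _) fun p ↦ ?_
  calc ‖((-1 : ℝ) ^ p * d p) • A ^ (2 * p)‖ ≤ d p * ‖A‖ ^ (2 * p) := by
        rw [norm_smul, norm_mul, norm_pow, norm_neg, norm_one, one_pow, one_mul,
          Real.norm_of_nonneg (hd0 p)]
        exact mul_le_mul_of_nonneg_left (norm_pow_le _ _) (hd0 p)
    _ = d p * (‖A‖ ^ 2) ^ p := by rw [pow_mul]

theorem exists_pos_tsum_smul_pow_two_mul_apply_eq_smul (hd0 : ∀ p, 0 ≤ d p)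
    (hd : ∀ p, d p ≤ (p ! : ℝ)⁻¹) (hd_zero : 0 < d 0) (A : E →L[ℝ] E) {μ : ℝ} (hμ : 0 ≤ μ)
    {e : E} (he : A (A e) = (-μ) • e) :
    ∃ s : ℝ, 0 < s ∧ (∑' p, ((-1 : ℝ) ^ p * d p) • A ^ (2 * p)) e = s • e := by
  have hsum := summable_mul_pow_of_le_inv_factorial hd0 hd hμ
  refine ⟨∑' p, d p * μ ^ p, ?_, ?_⟩
  · refine lt_of_lt_of_le ?_ (hsum.le_tsum 0 fun p _ ↦ mul_nonneg (hd0 p) (pow_nonneg hμ p))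
    simpa using hd_zero
  have hpow : ∀ p, (A ^ (2 * p)) e = (-μ) ^ p • e := by
    intro p
    induction p with
    | zero => simp
    | succ p ih =>
      rw [Nat.mul_succ, pow_add, mul_apply_eq_comp, sq, mul_apply_eq_comp,
        he, map_smul, ih, smul_smul, pow_succ']
  have hterm : ∀ p, ((-1 : ℝ) ^ p * d p) • (A ^ (2 * p)) e = (d p * μ ^ p) • e := by
    intro p
    rw [hpow, smul_smul, neg_pow μ, ← mul_assoc, mul_right_comm _ _ ((-1 : ℝ) ^ p), ← pow_add,
      ← two_mul, pow_mul, neg_one_sq, one_pow, one_mul]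
  refine ((summable_neg_one_pow_mul_smul_pow_two_mul hd0 hd A).hasSum.mapL
    (ContinuousLinearMap.apply ℝ E e)).unique ?_
  simpa only [ContinuousLinearMap.apply_apply, smul_apply, hterm]
    using hsum.hasSum.smul_const e

end PowerSeries

section Diagonal

variable {E : Type*} [NormedAddCommGroup E] [InnerProductSpace ℝ E]

theorem LinearMap.isPositive_neg_comp_self_of_skew {A : E →ₗ[ℝ] E}
    (hA : ∀ x y, ⟪A x, y⟫ = -⟪x, A y⟫) : (-(A ∘ₗ A)).IsPositive := by
  refine ⟨fun x y ↦ ?_, fun x ↦ ?_⟩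
  · simp only [LinearMap.neg_apply, LinearMap.comp_apply, inner_neg_left, inner_neg_right,
      hA (A x), hA x, neg_neg]
  · simpa only [LinearMap.neg_apply, LinearMap.comp_apply, inner_neg_left, hA (A x), neg_neg,
      RCLike.re_to_real] using real_inner_self_nonneg

theorem exists_orthonormalBasis_apply_apply_eq_neg_smul [FiniteDimensional ℝ E] {A : E →ₗ[ℝ] E}
    (hA : ∀ x y, ⟪A x, y⟫ = -⟪x, A y⟫) :
    ∃ (n : ℕ) (b : OrthonormalBasis (Fin n) ℝ E) (μ : Fin n → ℝ),
      ∀ i, 0 ≤ μ i ∧ A (A (b i)) = (-μ i) • b i := by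
  have hM := LinearMap.isPositive_neg_comp_self_of_skew hA
  refine ⟨_, hM.isSymmetric.eigenvectorBasis rfl, hM.isSymmetric.eigenvalues rfl,
    fun i ↦ ⟨hM.nonneg_eigenvalues rfl i, ?_⟩⟩
  have hi := hM.isSymmetric.apply_eigenvectorBasis rfl i
  rw [LinearMap.neg_apply, LinearMap.comp_apply, neg_eq_iff_eq_neg] at hi
  simpa using hi

variable {ι : Type*} [Fintype ι]

theorem OrthonormalBasis.inner_apply_of_apply_eq_smul (b : OrthonormalBasis ι ℝ E)
    {S : E →ₗ[ℝ] E} {s : ι → ℝ} (hS : ∀ i, S (b i) = s i • b i) (i : ι) (u : E) :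
    ⟪b i, S u⟫ = s i * ⟪b i, u⟫ := by
  classical
  conv_lhs => rw [← b.sum_repr' u]
  simp [hS, inner_sum, inner_smul_right, b.inner_eq_ite, mul_comm]

theorem OrthonormalBasis.eq_zero_of_inner_eq_zero (b : OrthonormalBasis ι ℝ E) {x : E}
    (hx : ∀ i, ⟪b i, x⟫ = 0) : x = 0 := by
  rw [← b.sum_repr' x]
  simp [hx]

theorem eq_zero_and_eq_zero_of_add_eq_zero_of_inner_eq_zero (b : OrthonormalBasis ι ℝ E)
    {S C : E →ₗ[ℝ] E} (hS : ∀ i, ∃ s : ℝ, 0 < s ∧ S (b i) = s • b i)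
    (hC : ∀ i, ∃ c : ℝ, 0 < c ∧ C (b i) = c • b i) {u ζ : E} (horth : ⟪ζ, u⟫ = 0)
    (h : S u + C ζ = 0) : u = 0 ∧ ζ = 0 := by
  choose s hs hSb using hS
  choose c hc hCb using hC
  have hζ : ∀ i, ⟪b i, ζ⟫ = -(s i / c i * ⟪b i, u⟫) := fun i ↦ by
    have hi : s i * ⟪b i, u⟫ + c i * ⟪b i, ζ⟫ = 0 := by
      rw [← b.inner_apply_of_apply_eq_smul hSb, ← b.inner_apply_of_apply_eq_smul hCb,
        ← inner_add_right, h, inner_zero_right]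
    field_simp [(hc i).ne']
    linear_combination hi
  have hsq : ∑ i, s i / c i * ⟪b i, u⟫ ^ 2 = 0 := by
    rw [← neg_eq_zero, ← horth, ← b.sum_inner_mul_inner, ← Finset.sum_neg_distrib]
    refine Finset.sum_congr rfl fun i _ ↦ ?_
    rw [real_inner_comm (b i) ζ, hζ]
    ring
  have hu : ∀ i, ⟪b i, u⟫ = 0 := fun i ↦ by
    have := (Finset.sum_eq_zero_iff_of_nonneg fun j _ ↦
      mul_nonneg (div_pos (hs j) (hc j)).le (sq_nonneg _)).mp hsq i (Finset.mem_univ i)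
    simpa [(hs i).ne', (hc i).ne'] using this
  exact ⟨b.eq_zero_of_inner_eq_zero hu, b.eq_zero_of_inner_eq_zero fun i ↦ by simp [hζ, hu]⟩

end Diagonal

theorem existsUnique_prod_linearMap_of_add_eq_zero {K E : Type*} [Field K] [AddCommGroup E]
    [Module K E] [FiniteDimensional K E] (S C : E →ₗ[K] E) {m k : Submodule K E}
    (hrank : Module.finrank K m + Module.finrank K k = Module.finrank K E)
    (hinj : ∀ u ∈ m, ∀ ζ ∈ k, S u + C ζ = 0 → u = 0 ∧ ζ = 0) :
    ∃! B : (E →ₗ[K] E) × (E →ₗ[K] E),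
      (∀ ξ, B.1 ξ ∈ m) ∧ (∀ ξ, B.2 ξ ∈ k) ∧ ∀ ξ, S (B.1 ξ) + C (B.2 ξ) = ξ := by
  set L : (m × k) →ₗ[K] E := (S ∘ₗ m.subtype).coprod (C ∘ₗ k.subtype)
  have hL : Function.Injective L := by
    rw [← LinearMap.ker_eq_bot, LinearMap.ker_eq_bot']
    rintro ⟨⟨u, hu⟩, ⟨ζ, hζ⟩⟩ h
    obtain ⟨rfl, rfl⟩ := hinj u hu ζ hζ h
    rfl
  set e := L.linearEquivOfInjective hL (by rw [Module.finrank_prod, hrank])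
  have he : ∀ x, e x = L x := L.linearEquivOfInjective_apply hL _
  refine ⟨(m.subtype ∘ₗ LinearMap.fst K m k ∘ₗ e.symm, k.subtype ∘ₗ LinearMap.snd K m k ∘ₗ e.symm),
    ⟨fun ξ ↦ (e.symm ξ).1.2, fun ξ ↦ (e.symm ξ).2.2, fun ξ ↦ ?_⟩, ?_⟩
  · exact (he _).symm.trans (e.apply_symm_apply ξ)
  rintro ⟨B₁, B₂⟩ ⟨h₁, h₂, h₃⟩
  have hB : ∀ ξ, ((⟨B₁ ξ, h₁ ξ⟩, ⟨B₂ ξ, h₂ ξ⟩) : m × k) = e.symm ξ := fun ξ ↦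
    e.injective <| by rw [e.apply_symm_apply, he]; exact h₃ ξ
  ext ξ
  · exact congrArg (fun x : m × k ↦ (x.1 : E)) (hB ξ)
  · exact congrArg (fun x : m × k ↦ (x.2 : E)) (hB ξ)

theorem statement0_general {g : Type*} [NormedAddCommGroup g] [InnerProductSpace ℝ g]
    [FiniteDimensional ℝ g]
    (bracket : g →ₗ[ℝ] g →ₗ[ℝ] g)
    (hinv : ∀ x y z : g, ⟪bracket x y, z⟫ = - ⟪y, bracket x z⟫)
    (k : Submodule ℝ g)
    (m : Submodule ℝ g) (hm : m = kᗮ)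
    (w : g) :
    ∃! B : (g →ₗ[ℝ] g) × (g →ₗ[ℝ] g),
      (∀ ξ : g, B.1 ξ ∈ m) ∧ (∀ ξ : g, B.2 ξ ∈ k) ∧
      ∀ ξ : g,
        sincOp (LinearMap.toContinuousLinearMap (bracket w)) (B.1 ξ) +
          cosOp (LinearMap.toContinuousLinearMap (bracket w)) (B.2 ξ) = ξ := by
  set A := LinearMap.toContinuousLinearMap (bracket w)
  obtain ⟨n, b, μ, hb⟩ := exists_orthonormalBasis_apply_apply_eq_neg_smul (A := bracket w) (hinv w)
  have hsinc : ∀ i, ∃ s : ℝ, 0 < s ∧ sincOp A (b i) = s • b i := fun i ↦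
    exists_pos_tsum_smul_pow_two_mul_apply_eq_smul (fun _ ↦ by positivity)
      (fun _ ↦ inv_factorial_le_inv_factorial (by omega)) (by simp) A (hb i).1 (hb i).2
  have hcos : ∀ i, ∃ c : ℝ, 0 < c ∧ cosOp A (b i) = c • b i := fun i ↦
    exists_pos_tsum_smul_pow_two_mul_apply_eq_smul (fun _ ↦ by positivity)
      (fun _ ↦ inv_factorial_le_inv_factorial (by omega)) (by simp) A (hb i).1 (hb i).2
  subst hm
  refine existsUnique_prod_linearMap_of_add_eq_zero (sincOp A : g →ₗ[ℝ] g) (cosOp A)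
    (by rw [add_comm]; exact k.finrank_add_finrank_orthogonal) fun u hu ζ hζ h ↦ ?_
  exact eq_zero_and_eq_zero_of_add_eq_zero_of_inner_eq_zero b hsinc hcos (hu ζ hζ) h

/-- Let `G` be a compact connected Lie group whose Lie algebra `g`
carries an `Ad(G)`-invariant inner product (equivalently, all operators
`ad_w = bracket w` are skew-symmetric).  Let `g = m ⊕ k` be an `Ad(K)`-invariant
orthogonal decomposition, where `k` is the Lie algebra of a closed subgroup `K`
(a Lie subalgebra) and `m = kᗮ`.  Then for every `w ∈ m` there exists a unique pair
of real-linear maps `B^m_w : g → m`, `B^k_w : g → k` such that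
`Id_g = (sin(ad_w)/ad_w) ∘ B^m_w + cos(ad_w) ∘ B^k_w` on `g`. -/
theorem statement0 {g : Type*} [NormedAddCommGroup g] [InnerProductSpace ℝ g]
    [FiniteDimensional ℝ g]
    (bracket : g →ₗ[ℝ] g →ₗ[ℝ] g)
    (hLie1 : ∀ x : g, bracket x x = 0)
    (hLie2 : ∀ x y z : g,
      bracket x (bracket y z) = bracket (bracket x y) z + bracket y (bracket x z))
    (hinv : ∀ x y z : g, ⟪bracket x y, z⟫ = - ⟪y, bracket x z⟫)
    (k : Submodule ℝ g) (hkalg : ∀ x ∈ k, ∀ y ∈ k, bracket x y ∈ k)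
    (m : Submodule ℝ g) (hm : m = kᗮ)
    (hAdK : ∀ x ∈ k, ∀ y ∈ m, bracket x y ∈ m)
    (w : g) (hw : w ∈ m) :
    ∃! B : (g →ₗ[ℝ] g) × (g →ₗ[ℝ] g),
      (∀ ξ : g, B.1 ξ ∈ m) ∧ (∀ ξ : g, B.2 ξ ∈ k) ∧
      ∀ ξ : g,
        sincOp (LinearMap.toContinuousLinearMap (bracket w)) (B.1 ξ) +
          cosOp (LinearMap.toContinuousLinearMap (bracket w)) (B.2 ξ) = ξ :=
  statement0_general bracket hinv k m hm w
end

section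
/- Let Δ be the root system of a compact semisimple Lie algebra g^C with respect to a Cartan subalgebra t^C, where t = a ⊕ t₀ is a σ-invariant Cartan subalgebra of g for an involution σ with a = (1−σ)t, t₀ = (1+σ)t. Let Δ' = {α ∈ Δ : α(t₀) = 0} and Δ₀ = {α ∈ Δ : α|_{a} = 0}. If α ∈ Δ', α̂ ∈ Δ, α ≠ α̂, and α|_a = α̂|_a, then α − α̂ ∈ Δ₀. -/
open scoped RealInnerProductSpace

theorem Submodule.inner_eq_inner_self_of_orthogonalProjectionOnto_eq {V : Type*}
    [NormedAddCommGroup V] [InnerProductSpace ℝ V] {K : Submodule ℝ V}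
    [K.HasOrthogonalProjection] {v w : V} (hv : v ∈ K)
    (hvw : K.orthogonalProjectionOnto v = K.orthogonalProjectionOnto w) :
    ⟪v, w⟫ = ⟪v, v⟫ := by
  rw [← K.inner_orthogonalProjectionOnto_eq_of_mem_left ⟨v, hv⟩ w, ← hvw,
    K.inner_orthogonalProjectionOnto_eq_of_mem_left ⟨v, hv⟩ v]

theorem Submodule.inner_pos_of_orthogonalProjectionOnto_eq {V : Type*}
    [NormedAddCommGroup V] [InnerProductSpace ℝ V] {K : Submodule ℝ V}
    [K.HasOrthogonalProjection] {v w : V} (hv : v ∈ K) (hv0 : v ≠ 0)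
    (hvw : K.orthogonalProjectionOnto v = K.orthogonalProjectionOnto w) :
    0 < ⟪v, w⟫ := by
  rw [inner_eq_inner_self_of_orthogonalProjectionOnto_eq hv hvw]
  exact real_inner_self_pos.mpr hv0

theorem statement3_general {V : Type*} [NormedAddCommGroup V] [InnerProductSpace ℝ V]
    [FiniteDimensional ℝ V]
    (Δ : Set V) (h0 : (0 : V) ∉ Δ)
    -- the standard property of root systems: `⟨α, β⟩ > 0` and `α ≠ β` imply `α − β` is a root
    (hrs : ∀ α ∈ Δ, ∀ β ∈ Δ, α ≠ β → 0 < ⟪α, β⟫ → α - β ∈ Δ)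
    (A : Submodule ℝ V)
    (α : V) (hα : α ∈ Δ) (hαA : α ∈ A)  -- i.e. `α ∈ Δ'`: `α(t₀) = 0`
    (α' : V) (hα' : α' ∈ Δ) (hne : α ≠ α')
    (hproj : Submodule.orthogonalProjectionOnto A α = Submodule.orthogonalProjectionOnto A α') :  -- `α|_a = α̂|_a`
    α - α' ∈ Δ ∧ Submodule.orthogonalProjectionOnto A (α - α') = 0 := by
  have hα0 : α ≠ 0 := fun h => h0 (h ▸ hα)
  refine ⟨hrs α hα α' hα' hne (A.inner_pos_of_orthogonalProjectionOnto_eq hαA hα0 hproj), ?_⟩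
  rw [map_sub, hproj, sub_self]

/-- Let `Δ` be the root system of a compact semisimple Lie
algebra with respect to a σ-invariant Cartan subalgebra `t = a ⊕ t₀`.  We realize
the roots as vectors in the real inner product space `V` spanned by the root
vectors `A_α ∈ i·t`, so that `A ⊆ V` corresponds to `i·a` and `Aᗮ` to `i·t₀`;
`α(t₀) = 0` becomes `α ∈ A`, and `α|_a = α̂|_a` becomes equality of the orthogonal
projections onto `A`.  `Δ₀ = {α ∈ Δ : α|_a = 0}` corresponds to those roots with
vanishing projection onto `A`.  Claim: if `α ∈ Δ' = {α ∈ Δ : α(t₀) = 0}`,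
`α̂ ∈ Δ`, `α ≠ α̂` and `α|_a = α̂|_a`, then `α − α̂ ∈ Δ₀`. -/
theorem statement3 {V : Type*} [NormedAddCommGroup V] [InnerProductSpace ℝ V]
    [FiniteDimensional ℝ V]
    (Δ : Set V) (h0 : (0 : V) ∉ Δ)
    (hsym : ∀ α ∈ Δ, -α ∈ Δ)
    -- the standard property of root systems: `⟨α, β⟩ > 0` and `α ≠ β` imply `α − β` is a root
    (hrs : ∀ α ∈ Δ, ∀ β ∈ Δ, α ≠ β → 0 < ⟪α, β⟫ → α - β ∈ Δ)
    (A : Submodule ℝ V)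
    (α : V) (hα : α ∈ Δ) (hαA : α ∈ A)  -- i.e. `α ∈ Δ'`: `α(t₀) = 0`
    (α' : V) (hα' : α' ∈ Δ) (hne : α ≠ α')
    (hproj : Submodule.orthogonalProjectionOnto A α = Submodule.orthogonalProjectionOnto A α') :  -- `α|_a = α̂|_a`
    α - α' ∈ Δ ∧ Submodule.orthogonalProjectionOnto A (α - α') = 0 :=
  statement3_general Δ h0 hrs A α hα hαA α' hα' hne hproj
end

section
/- Let c_Z ∈ ℝ, C > 0, C₁ ≥ 0 and define f' : ℝ⁺ → ℝ by f'(x) = sqrt(C sinh²x + c_Z² sinh²x cosh⁻²x + C₁). Then f' is smooth and positive on ℝ⁺ (positive for x>0 when C₁=0), and satisfies the ODE f''(x) f'(x) = (C + c_Z²/cosh⁴x) cosh x sinh x for all x > 0; in particular f''(x) > 0 on ℝ⁺. -/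
/-- Let `c_Z ∈ ℝ`, `C > 0`, `C₁ ≥ 0` and
`f'(x) = sqrt(C·sinh²x + c_Z²·sinh²x·cosh⁻²x + C₁)`.  Then `f'` is smooth and
positive on `ℝ⁺` and satisfies
`f''(x)·f'(x) = (C + c_Z²/cosh⁴x)·cosh x·sinh x` for all `x > 0`; in particular
`f''(x) > 0` on `ℝ⁺`. -/
theorem statement16 (C c_Z C₁ : ℝ) (hC : 0 < C) (hC₁ : 0 ≤ C₁)
    (f' : ℝ → ℝ)
    (hf' : ∀ x : ℝ, f' x =
      Real.sqrt (C * Real.sinh x ^ 2 + c_Z ^ 2 * Real.sinh x ^ 2 / Real.cosh x ^ 2 + C₁)) :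
    ContDiffOn ℝ (⊤ : ℕ∞) f' (Set.Ioi (0 : ℝ)) ∧
    (∀ x > (0 : ℝ), 0 < f' x) ∧
    (∀ x > (0 : ℝ),
      deriv f' x * f' x = (C + c_Z ^ 2 / Real.cosh x ^ 4) * Real.cosh x * Real.sinh x) ∧
    (∀ x > (0 : ℝ), 0 < deriv f' x) := by
  set g : ℝ → ℝ := fun x =>
    C * Real.sinh x ^ 2 + c_Z ^ 2 * Real.sinh x ^ 2 / Real.cosh x ^ 2 + C₁ with hg
  have hfeq : f' = fun x => Real.sqrt (g x) := funext fun x => hf' x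
  have hgpos : ∀ x > (0 : ℝ), 0 < g x := by
    intro x hx
    have hs : 0 < Real.sinh x := Real.sinh_pos_iff.2 hx
    have hc : 0 < Real.cosh x := Real.cosh_pos x
    have h0 : 0 ≤ c_Z ^ 2 * Real.sinh x ^ 2 / Real.cosh x ^ 2 := by positivity
    simp only [hg]
    nlinarith [mul_pos hC (pow_pos hs 2)]
  have hcne : ∀ x : ℝ, Real.cosh x ^ 2 ≠ 0 := fun x => by positivity
  have hgsmooth : ContDiff ℝ (⊤ : ℕ∞) g := by
    have h1 : ContDiff ℝ (⊤ : ℕ∞) fun x => Real.sinh x ^ 2 := Real.contDiff_sinh.pow 2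
    have h2 : ContDiff ℝ (⊤ : ℕ∞) fun x => c_Z ^ 2 * Real.sinh x ^ 2 / Real.cosh x ^ 2 :=
      (contDiff_const.mul h1).div (Real.contDiff_cosh.pow 2) hcne
    exact ((contDiff_const.mul h1).add h2).add contDiff_const
  have hgderiv : ∀ x : ℝ, HasDerivAt g
      (C * (2 * Real.sinh x * Real.cosh x) +
        c_Z ^ 2 * ((2 * Real.sinh x * Real.cosh x * Real.cosh x ^ 2 -
          Real.sinh x ^ 2 * (2 * Real.cosh x * Real.sinh x)) / (Real.cosh x ^ 2) ^ 2)) x := by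
    intro x
    have hs := (Real.hasDerivAt_sinh x).pow 2
    have hc := (Real.hasDerivAt_cosh x).pow 2
    have hdiv := hs.div hc (hcne x)
    have h := ((hs.const_mul C).add (hdiv.const_mul (c_Z ^ 2))).add_const C₁
    convert h using 1
    · rfl
    · rfl
    · funext y; simp only [hg, Pi.add_apply, Pi.pow_apply, Pi.div_apply]; ring
    · norm_num
  have hfderiv : ∀ x > (0 : ℝ), HasDerivAt f'
      ((C + c_Z ^ 2 / Real.cosh x ^ 4) * Real.cosh x * Real.sinh x / f' x) x := by
    intro x hx
    have hg0 := hgpos x hx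
    have h := (hgderiv x).sqrt hg0.ne'
    have h' : HasDerivAt f' ((C * (2 * Real.sinh x * Real.cosh x) +
        c_Z ^ 2 * ((2 * Real.sinh x * Real.cosh x * Real.cosh x ^ 2 -
          Real.sinh x ^ 2 * (2 * Real.cosh x * Real.sinh x)) / (Real.cosh x ^ 2) ^ 2)) /
        (2 * Real.sqrt (g x))) x := by rw [hfeq]; exact h
    have hfx : 0 < f' x := by rw [hf' x]; exact Real.sqrt_pos.2 hg0
    have hsq : Real.sqrt (g x) = f' x := by simp only [hg]; exact (hf' x).symm
    have hcx : (0:ℝ) < Real.cosh x := Real.cosh_pos x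
    have hid : Real.cosh x ^ 2 - Real.sinh x ^ 2 = 1 := Real.cosh_sq_sub_sinh_sq x
    have E : (C * (2 * Real.sinh x * Real.cosh x) +
        c_Z ^ 2 * ((2 * Real.sinh x * Real.cosh x * Real.cosh x ^ 2 -
          Real.sinh x ^ 2 * (2 * Real.cosh x * Real.sinh x)) / (Real.cosh x ^ 2) ^ 2)) /
        (2 * Real.sqrt (g x)) =
        (C + c_Z ^ 2 / Real.cosh x ^ 4) * Real.cosh x * Real.sinh x / f' x := by
      rw [hsq]
      have hnum : 2 * Real.sinh x * Real.cosh x * Real.cosh x ^ 2 -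
          Real.sinh x ^ 2 * (2 * Real.cosh x * Real.sinh x) = 2 * Real.sinh x * Real.cosh x := by
        linear_combination (2 * Real.sinh x * Real.cosh x) * hid
      rw [hnum]
      field_simp
    exact E ▸ h'
  refine ⟨?_, ?_, ?_, ?_⟩
  · intro x hx
    have hg0 := hgpos x hx
    rw [hfeq]
    exact ((Real.contDiffAt_sqrt hg0.ne').comp x hgsmooth.contDiffAt).contDiffWithinAt
  · intro x hx
    rw [hf' x]; exact Real.sqrt_pos.2 (hgpos x hx)
  · intro x hx
    have hfx : 0 < f' x := by rw [hf' x]; exact Real.sqrt_pos.2 (hgpos x hx)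
    rw [(hfderiv x hx).deriv]
    field_simp
  · intro x hx
    have hfx : 0 < f' x := by rw [hf' x]; exact Real.sqrt_pos.2 (hgpos x hx)
    rw [(hfderiv x hx).deriv]
    have hs : 0 < Real.sinh x := Real.sinh_pos_iff.2 hx
    have hc : (0:ℝ) < Real.cosh x := Real.cosh_pos x
    have : 0 < C + c_Z ^ 2 / Real.cosh x ^ 4 := by positivity
    positivity
end
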